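/- Given an outer action (α, ξ) of a dg Lie algebra 𝔤 on a dg Lie algebra L, the twisted semi-direct product L ⋊_ξ 𝔤, whose underlying graded Lie algebra is the semi-direct product [(a,x),(b,y)] = ([a,b] + x·b + a·y, [x,y]) and whose differential is ∂^ξ(a,x) = (da + ξ(x), dx), is a differential graded Lie algebra; i.e., ∂^ξ squares to zero and satisfies the graded Leibniz rule with respect to the bracket. -/

import Mathlib

open TensorProduct

/-- A differential graded Lie algebra over ℚ, presented as a ℚ-module `V`
with an internal ℤ-grading by submodules (homologically graded), a degree `-1`
differential and a graded Lie bracket.  All sign axioms are stated on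
homogeneous elements, with `(-1 : ℚ) ^ (i*j)` (a `zpow`) implementing Koszul signs.
The field `twist` is the Koszul sign operator: `twist n` multiplies a homogeneous
element of degree `i` by `(-1)^(n*i)`. -/
structure DGLA (V : Type) [AddCommGroup V] [Module ℚ V] where
  deg : ℤ → Submodule ℚ V
  total : iSup deg = ⊤
  twist : ℤ → V →ₗ[ℚ] V
  twist_apply : ∀ n i, ∀ x ∈ deg i, twist n x = ((-1 : ℚ) ^ (n * i)) • x
  d : V →ₗ[ℚ] V
  br : V →ₗ[ℚ] V →ₗ[ℚ] V
  d_deg : ∀ i, ∀ x ∈ deg i, d x ∈ deg (i - 1)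
  d_sq : ∀ x, d (d x) = 0
  br_deg : ∀ i j, ∀ x ∈ deg i, ∀ y ∈ deg j, br x y ∈ deg (i + j)
  antisymm : ∀ i j, ∀ x ∈ deg i, ∀ y ∈ deg j,
    br x y = -((-1 : ℚ) ^ (i * j)) • br y x
  jacobi : ∀ i j, ∀ x ∈ deg i, ∀ y ∈ deg j, ∀ z,
    br x (br y z) = br (br x y) z + ((-1 : ℚ) ^ (i * j)) • br y (br x z)
  leibniz : ∀ i, ∀ x ∈ deg i, ∀ y,
    d (br x y) = br (d x) y + ((-1 : ℚ) ^ i) • br x (d y)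


/-- An outer action (Tanré) of a dg Lie algebra `G` on a dg Lie algebra `L`.
`act x a` denotes the left action `x · a`; the right version is
`a · x = -(-1)^{|a||x|} x · a`. -/
structure OuterAction {V W : Type} [AddCommGroup V] [Module ℚ V]
    [AddCommGroup W] [Module ℚ W] (G : DGLA V) (L : DGLA W) where
  act : V →ₗ[ℚ] W →ₗ[ℚ] W
  ξ : V →ₗ[ℚ] W
  act_deg : ∀ i j, ∀ x ∈ G.deg i, ∀ a ∈ L.deg j, act x a ∈ L.deg (i + j)
  ξ_deg : ∀ i, ∀ x ∈ G.deg i, ξ x ∈ L.deg (i - 1)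
  -- α is an action of G on L …
  act_lie : ∀ i j, ∀ x ∈ G.deg i, ∀ y ∈ G.deg j, ∀ a,
    act (G.br x y) a = act x (act y a) - ((-1 : ℚ) ^ (i * j)) • act y (act x a)
  -- … by derivations
  act_der : ∀ i j, ∀ x ∈ G.deg i, ∀ a ∈ L.deg j, ∀ b,
    act x (L.br a b) = L.br (act x a) b + ((-1 : ℚ) ^ (i * j)) • L.br a (act x b)
  -- ξ is a chain map of degree -1: d ξ(x) = -ξ(dx)
  ξ_chain : ∀ x, L.d (ξ x) = -ξ (G.d x)
  -- ξ is a derivation: ξ[x,y] = ξ(x)·y + (-1)^{|x|} x·ξ(y)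
  ξ_der : ∀ i j, ∀ x ∈ G.deg i, ∀ y ∈ G.deg j,
    ξ (G.br x y) = -((-1 : ℚ) ^ ((i - 1) * j)) • act y (ξ x) + ((-1 : ℚ) ^ i) • act x (ξ y)
  -- compatibility: d(x·a) = d(x)·a + (-1)^{|x|} x·d(a) + [ξ(x),a]
  compat : ∀ i, ∀ x ∈ G.deg i, ∀ a,
    L.d (act x a) = act (G.d x) a + ((-1 : ℚ) ^ i) • act x (L.d a) + L.br (ξ x) a

section SemiDirect
variable {V W : Type} [AddCommGroup V] [Module ℚ V] [AddCommGroup W] [Module ℚ W]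
  {G : DGLA V} {L : DGLA W} (A : OuterAction G L)

/-- The bracket of the twisted semi-direct product `L ⋊_ξ G` on homogeneous
elements of degrees `m`, `n`:
`[(a,x),(b,y)] = ([a,b] + x·b + a·y, [x,y])`, where `a·y = -(-1)^{|a||y|} y·a`. -/
def sdBr (m n : ℤ) (p : W × V) (q : W × V) : W × V :=
  (L.br p.1 q.1 + A.act p.2 q.1 - ((-1 : ℚ) ^ (m * n)) • A.act q.2 p.1, G.br p.2 q.2)

/-- The twisted differential `∂^ξ(a,x) = (da + ξ(x), dx)` of `L ⋊_ξ G`. -/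
def sdD (p : W × V) : W × V := (L.d p.1 + A.ξ p.2, G.d p.2)

end SemiDirect

/-- Homogeneous elements of degree `m` of `L ⋊_ξ G`. -/
def sdDeg {V W : Type} [AddCommGroup V] [Module ℚ V] [AddCommGroup W] [Module ℚ W]
    (G : DGLA V) (L : DGLA W) (m : ℤ) : Set (W × V) :=
  {p | p.1 ∈ L.deg m ∧ p.2 ∈ G.deg m}

private lemma sgnE {k : ℤ} (h : Even k) : (-1 : ℚ) ^ k = 1 := h.neg_one_zpow
private lemma sgnO {k : ℤ} (h : Odd k) : (-1 : ℚ) ^ k = -1 := h.neg_one_zpow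

/-- the twisted semi-direct product `L ⋊_ξ G` associated to an outer
action is a differential graded Lie algebra: `∂^ξ` has degree `-1`, squares to
zero, and satisfies the graded Leibniz rule with respect to the bracket. -/
theorem stmt4 {V W : Type} [AddCommGroup V] [Module ℚ V] [AddCommGroup W] [Module ℚ W]
    (G : DGLA V) (L : DGLA W) (A : OuterAction G L) :
    -- ∂^ξ has degree -1
    (∀ m, ∀ p ∈ sdDeg G L m, sdD A p ∈ sdDeg G L (m - 1)) ∧
    -- ∂^ξ squares to zero
    (∀ p : W × V, sdD A (sdD A p) = 0) ∧
    -- the bracket has degree 0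
    (∀ m n, ∀ p ∈ sdDeg G L m, ∀ q ∈ sdDeg G L n, sdBr A m n p q ∈ sdDeg G L (m + n)) ∧
    -- graded Leibniz rule
    (∀ m n, ∀ p ∈ sdDeg G L m, ∀ q ∈ sdDeg G L n,
      sdD A (sdBr A m n p q) =
        sdBr A (m - 1) n (sdD A p) q + ((-1 : ℚ) ^ m) • sdBr A m (n - 1) p (sdD A q)) := by
  refine ⟨?_, ?_, ?_, ?_⟩
  · rintro m ⟨a, x⟩ ⟨ha, hx⟩
    exact ⟨Submodule.add_mem _ (L.d_deg m a ha) (A.ξ_deg m x hx), G.d_deg m x hx⟩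
  · rintro ⟨a, x⟩
    simp only [sdD, map_add, L.d_sq, A.ξ_chain, G.d_sq, Prod.mk_eq_zero]
    constructor <;> simp
  · rintro m n ⟨a, x⟩ ⟨ha, hx⟩ ⟨b, y⟩ ⟨hb, hy⟩
    refine ⟨Submodule.sub_mem _ (Submodule.add_mem _ (L.br_deg m n a ha b hb)
      (A.act_deg m n x hx b hb)) (Submodule.smul_mem _ _ ?_), G.br_deg m n x hx y hy⟩
    have := A.act_deg n m y hy a ha
    rwa [add_comm] at this
  · rintro m n ⟨a, x⟩ ⟨ha, hx⟩ ⟨b, y⟩ ⟨hb, hy⟩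
    have e1 := L.leibniz m a ha b
    have e2 := A.compat m x hx b
    have e3 := A.compat n y hy a
    have e4 := A.ξ_der m n x hx y hy
    have e5 := G.leibniz m x hx y
    have e6 : L.br a (A.ξ y) = -((-1 : ℚ) ^ (m * (n - 1))) • L.br (A.ξ y) a :=
      L.antisymm m (n - 1) a ha (A.ξ y) (A.ξ_deg n y hy)
    simp only [sdD, sdBr, Prod.mk_add_mk, Prod.smul_mk, Prod.mk.injEq, map_add, map_sub, map_smul,
      LinearMap.add_apply, LinearMap.sub_apply, LinearMap.smul_apply]
    constructor
    · rw [e1, e2, e3, e4, e6]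
      rcases Int.even_or_odd m with hm | hm <;> rcases Int.even_or_odd n with hn | hn
      · rw [sgnE hm, sgnE hn, sgnE (hm.mul_right n), sgnE (hn.mul_left (m - 1)),
          sgnE (hm.mul_right (n - 1))]
        module
      · rw [sgnE hm, sgnO hn, sgnE (hm.mul_right n), sgnO ((hm.sub_odd odd_one).mul hn),
          sgnE (hm.mul_right (n - 1))]
        module
      · rw [sgnO hm, sgnE hn, sgnE (hn.mul_left m), sgnE (hn.mul_left (m - 1)),
          sgnO (hm.mul (hn.sub_odd odd_one))]
        module
      · rw [sgnO hm, sgnO hn, sgnO (hm.mul hn), sgnE ((hm.sub_odd odd_one).mul_right n),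
          sgnE ((hn.sub_odd odd_one).mul_left m)]
        module
    · rw [e5]
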